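/- Under the hypotheses of the previous statement, if in addition the function t⁰ ↦ V(t⁰) = min_{x∈K} Σ_{a∈A} t⁰_a C_a(x) is differentiable at a point t⁰ and x* ∈ K attains the minimum at t⁰, then for every a ∈ A, ∂V/∂t⁰_a (t⁰) = C_a(x*) = ∫_0^{x*_a} f(s/m_a) ds. (This is the paper's sensitivity formula (13).) -/

import Mathlib

/-!
The value `V(t) = inf_{x ∈ K} Σ_a t_a C_a(x)` is an infimum of linear functions of `t`, so it lies
below the linear function `L(t) = Σ_a t_a C_a(x*)` and touches it at `t⁰`, where `x*` is optimal.
Hence `L - V` has a minimum at `t⁰`; if `V` is differentiable there, its derivative is that of `L`,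
and the partial derivative in direction `a` is `C_a(x*)`.
-/

open Filter Topology

open scoped BigOperators

theorem fderiv_eq_of_le_of_eq {E : Type*} [NormedAddCommGroup E] [NormedSpace ℝ E]
    {f g : E → ℝ} {x₀ : E} (hf : DifferentiableAt ℝ f x₀) (hg : DifferentiableAt ℝ g x₀)
    (hle : ∀ᶠ x in 𝓝 x₀, f x ≤ g x) (heq : f x₀ = g x₀) :
    fderiv ℝ f x₀ = fderiv ℝ g x₀ := by
  have hmin : IsLocalMin (fun x => g x - f x) x₀ := by
    filter_upwards [hle] with x hx
    rw [heq, sub_self]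
    exact sub_nonneg.mpr hx
  exact (sub_eq_zero.mp (hmin.hasFDerivAt_eq_zero (hg.hasFDerivAt.sub hf.hasFDerivAt))).symm

section LinearParametricMinimum

variable {A X : Type*} [Fintype A] [TopologicalSpace X]

theorem sInf_image_sum_mul_le {K : Set X} (hK : IsCompact K) {C : X → A → ℝ}
    (hC : Continuous C) (t : A → ℝ) {x : X} (hx : x ∈ K) :
    sInf ((fun y => ∑ a, t a * C y a) '' K) ≤ ∑ a, t a * C x a := by
  have hcont : Continuous fun y => ∑ a, t a * C y a := by fun_prop
  exact csInf_le (hK.bddBelow_image hcont.continuousOn) ⟨x, hx, rfl⟩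

theorem fderiv_sInf_image_sum_mul_apply_single [DecidableEq A] {K : Set X} (hK : IsCompact K)
    {C : X → A → ℝ} (hC : Continuous C) {t₀ : A → ℝ} {x₀ : X} (hx₀ : x₀ ∈ K)
    (hopt : ∑ a, t₀ a * C x₀ a = sInf ((fun x => ∑ a, t₀ a * C x a) '' K))
    (hdiff : DifferentiableAt ℝ (fun t : A → ℝ => sInf ((fun x => ∑ a, t a * C x a) '' K)) t₀)
    (a : A) :
    fderiv ℝ (fun t : A → ℝ => sInf ((fun x => ∑ a, t a * C x a) '' K)) t₀ (Pi.single a 1) =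
      C x₀ a := by
  let L : (A → ℝ) →L[ℝ] ℝ := ∑ b, C x₀ b • ContinuousLinearMap.proj b
  have hL : ∀ t, L t = ∑ b, t b * C x₀ b := fun t => by
    simp [L, mul_comm]
  have hderiv := fderiv_eq_of_le_of_eq hdiff L.differentiableAt
    (Eventually.of_forall fun t => by rw [hL]; exact sInf_image_sum_mul_le hK hC t hx₀)
    (by rw [hL, hopt])
  rw [hderiv, L.fderiv, hL]
  simp [Pi.single_apply]

end LinearParametricMinimum

theorem continuous_intervalIntegral_comp_div {A : Type*} {f : ℝ → ℝ} (hf : Continuous f)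
    (m : A → ℝ) :
    Continuous fun (x : A → ℝ) (a : A) => ∫ s in (0:ℝ)..(x a), f (s / m a) :=
  continuous_pi fun a =>
    (intervalIntegral.continuous_primitive
      (fun _ _ => (hf.comp (continuous_id.div_const (m a))).intervalIntegrable _ _) 0).comp
      (continuous_apply a)

theorem tap_value_sensitivity_freeflow_general
    (A : Type*) [Fintype A] [DecidableEq A]
    (m : A → ℝ)
    (f : ℝ → ℝ) (hf : Continuous f)
    (K : Set (A → ℝ)) (hKcomp : IsCompact K)
    (t0 : A → ℝ)
    (hdiff : DifferentiableAt ℝ (fun t : A → ℝ =>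
      sInf ((fun x : A → ℝ =>
        ∑ a, t a * ∫ s in (0:ℝ)..(x a), f (s / m a)) '' K)) t0)
    (xstar : A → ℝ) (hxstar : xstar ∈ K)
    (hopt : (∑ a, t0 a * ∫ s in (0:ℝ)..(xstar a), f (s / m a)) =
      sInf ((fun x : A → ℝ =>
        ∑ a, t0 a * ∫ s in (0:ℝ)..(x a), f (s / m a)) '' K)) :
    ∀ a : A,
      fderiv ℝ (fun t : A → ℝ =>
          sInf ((fun x : A → ℝ =>
            ∑ a, t a * ∫ s in (0:ℝ)..(x a), f (s / m a)) '' K)) t0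
        (Pi.single a 1) =
      ∫ s in (0:ℝ)..(xstar a), f (s / m a) :=
  fderiv_sInf_image_sum_mul_apply_single hKcomp (continuous_intervalIntegral_comp_div hf m)
    hxstar hopt hdiff

/-- The paper's sensitivity formula (13): if `V(t⁰) = min_{x ∈ K} Σ_a t⁰_a C_a(x)`
is differentiable at `t⁰` and `x* ∈ K` attains the minimum, then
`∂V/∂t⁰_a = C_a(x*) = ∫_0^{x*_a} f(s/m_a) ds` for every link `a`. -/
theorem tap_value_sensitivity_freeflow
    (A : Type*) [Fintype A] [DecidableEq A]
    (m : A → ℝ) (hm : ∀ a, 0 < m a)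
    (f : ℝ → ℝ) (hf : Continuous f)
    (K : Set (A → ℝ)) (hKne : K.Nonempty) (hKcomp : IsCompact K)
    (hKnonneg : ∀ x ∈ K, ∀ a, 0 ≤ x a)
    (t0 : A → ℝ)
    (hdiff : DifferentiableAt ℝ (fun t : A → ℝ =>
      sInf ((fun x : A → ℝ =>
        ∑ a, t a * ∫ s in (0:ℝ)..(x a), f (s / m a)) '' K)) t0)
    (xstar : A → ℝ) (hxstar : xstar ∈ K)
    (hopt : (∑ a, t0 a * ∫ s in (0:ℝ)..(xstar a), f (s / m a)) =
      sInf ((fun x : A → ℝ =>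
        ∑ a, t0 a * ∫ s in (0:ℝ)..(x a), f (s / m a)) '' K)) :
    ∀ a : A,
      fderiv ℝ (fun t : A → ℝ =>
          sInf ((fun x : A → ℝ =>
            ∑ a, t a * ∫ s in (0:ℝ)..(x a), f (s / m a)) '' K)) t0
        (Pi.single a 1) =
      ∫ s in (0:ℝ)..(xstar a), f (s / m a) :=
  tap_value_sensitivity_freeflow_general A m f hf K hKcomp t0 hdiff xstar hxstar hopt
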